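/- arXiv:2212.04756 — 11 statements merged into one kernel-verified Lean document; each statement's English description precedes it below -/
import Mathlib

section
/- Let G, H : ℝ^n → ℝ^m be continuous, let S = {x ∈ ℝ^n : G(x) ≥ 0, H(x) ≥ 0, G(x)ᵀH(x) = 0} be nonempty with 0 ∉ S, and let k = min_{x∈S} ‖x‖₀ (this minimum is attained since ‖·‖₀ takes only finitely many values), so k ≥ 1. Assume that dist(S, Q_{k−K}) > 0 for every K = 1, …, k, and set ν̄ = min_{K=1,…,k} (1/K)·dist(S, Q_{k−K}) > 0. Then for every ν with 0 < ν < ν̄: (a) Φ_ν(x) ≥ k for all x ∈ S; (b) for x ∈ S, Φ_ν(x) = k if and only if ‖x‖₀ = k. Consequently the problems min_{x∈S} ‖x‖₀ and min_{x∈S} Φ_ν(x) have the same set of global minimizers and the same optimal value k. -/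
open scoped BigOperators

/-- Number of nonzero components of `x`. -/
noncomputable def nnz {n : ℕ} (x : EuclideanSpace ℝ (Fin n)) : ℕ :=
  Set.ncard {i | x i ≠ 0}

/-- Capped-ℓ1 surrogate `Φ_ν(x) = ∑ᵢ min{1, |xᵢ|/ν}`. -/
noncomputable def Phi {n : ℕ} (ν : ℝ) (x : EuclideanSpace ℝ (Fin n)) : ℝ :=
  ∑ i, min 1 (|x i| / ν)

/-!
Split the coordinates of `x` into the large ones, `ν ≤ |xᵢ|`, on which `φ_ν` is capped at
`1`, and the small ones. Then `Φ_ν(x) = a + r / ν`, where `a` is the number of large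
coordinates and `r` is the `ℓ¹` norm of the small part; zeroing the small part shows
`dist(x, Q_a) ≤ r`. If `a < k`, the choice of `ν` gives `r ≥ dist(S, Q_a) > (k - a) ν`, so
`Φ_ν(x) > k`. Otherwise `Φ_ν(x) ≥ a ≥ k`, with equality only if `r = 0`, i.e. `‖x‖₀ ≤ a = k`.
As `Φ_ν ≤ ‖·‖₀` everywhere, the level sets `{Φ_ν = k}` and `{‖·‖₀ = k}` agree on `S`, hence
so do the minimizers.
-/

lemma forall_le_iff_forall_le_of_eq_iff {α β γ : Type*} [PartialOrder β] [PartialOrder γ]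
    {S : Set α} {f : α → β} {g : α → γ} {c : β} {d : γ}
    (hf : ∀ x ∈ S, c ≤ f x) (hc : ∃ x ∈ S, f x = c) (hg : ∀ x ∈ S, d ≤ g x)
    (hfg : ∀ x ∈ S, g x = d ↔ f x = c) {x : α} (hx : x ∈ S) :
    (∀ y ∈ S, f x ≤ f y) ↔ (∀ y ∈ S, g x ≤ g y) := by
  obtain ⟨x₀, hx₀, hfx₀⟩ := hc
  constructor
  · intro hmin y hy
    have hfx : f x = c := le_antisymm (hfx₀ ▸ hmin x₀ hx₀) (hf x hx)
    exact (hfg x hx).mpr hfx ▸ hg y hy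
  · intro hmin y hy
    have hgx : g x = d := le_antisymm ((hfg x₀ hx₀).mpr hfx₀ ▸ hmin x₀ hx₀) (hg x hx)
    exact (hfg x hx).mp hgx ▸ hf y hy

namespace CappedL1

open Finset Metric

variable {n : ℕ}

lemma nnz_eq_card (x : EuclideanSpace ℝ (Fin n)) : nnz x = #{i | x i ≠ 0} := by
  rw [nnz, ← Set.ncard_coe_finset]
  simp

lemma nnz_le_card_of_eq_zero {x : EuclideanSpace ℝ (Fin n)} {A : Finset (Fin n)}
    (hx : ∀ i ∉ A, x i = 0) : nnz x ≤ #A := by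
  rw [nnz_eq_card]
  exact card_le_card fun i hi => by_contra fun hiA => (mem_filter.mp hi).2 (hx i hiA)

lemma Phi_le_nnz (ν : ℝ) (x : EuclideanSpace ℝ (Fin n)) : Phi ν x ≤ nnz x := by
  calc Phi ν x ≤ ∑ i, if x i ≠ 0 then (1 : ℝ) else 0 := by
        refine sum_le_sum fun i _ => ?_
        by_cases h : x i = 0 <;> simp [h]
    _ = nnz x := by rw [sum_boole, nnz_eq_card]

lemma norm_le_sum_abs (z : EuclideanSpace ℝ (Fin n)) : ‖z‖ ≤ ∑ i, |z i| := by
  rw [EuclideanSpace.norm_eq, Real.sqrt_le_left (sum_nonneg fun i _ => abs_nonneg _)]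
  simpa [Real.norm_eq_abs] using
    sum_sq_le_sq_sum_of_nonneg (s := univ) (f := fun i => |z i|) fun i _ => abs_nonneg _

lemma infDist_setOf_nnz_le_card_le (x : EuclideanSpace ℝ (Fin n)) (A : Finset (Fin n)) :
    infDist x {y | nnz y ≤ #A} ≤ ∑ i ∈ Aᶜ, |x i| := by
  set y : EuclideanSpace ℝ (Fin n) := WithLp.toLp 2 fun i => if i ∈ A then x i else 0
  have hy : nnz y ≤ #A := nnz_le_card_of_eq_zero fun i hi => by simp [y, hi]
  calc infDist x {y | nnz y ≤ #A}
      ≤ ‖x - y‖ := dist_eq_norm x y ▸ infDist_le_dist_of_mem hy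
    _ ≤ ∑ i, |(x - y) i| := norm_le_sum_abs _
    _ = ∑ i ∈ Aᶜ, |x i| := by
        rw [← sum_add_sum_compl A, sum_eq_zero fun i hi => by simp [y, hi], zero_add]
        exact sum_congr rfl fun i hi => by simp [y, mem_compl.mp hi]

noncomputable def largeCoords (ν : ℝ) (x : EuclideanSpace ℝ (Fin n)) : Finset (Fin n) :=
  {i | ν ≤ |x i|}

variable {ν : ℝ} {x : EuclideanSpace ℝ (Fin n)} {k : ℕ}

lemma Phi_eq_card_add_sum_div (hν : 0 < ν) :
    Phi ν x = #(largeCoords ν x) + (∑ i ∈ (largeCoords ν x)ᶜ, |x i|) / ν := by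
  rw [Phi, ← sum_add_sum_compl (largeCoords ν x), sum_div]
  congr 1
  · rw [← nsmul_one, ← sum_const]
    exact sum_congr rfl fun i hi =>
      min_eq_left ((one_le_div hν).mpr (mem_filter.mp hi).2)
  · exact sum_congr rfl fun i hi =>
      min_eq_right ((div_le_one hν).mpr (not_le.mp (by simpa [largeCoords] using hi)).le)

lemma card_add_infDist_div_le_Phi (hν : 0 < ν) :
    #(largeCoords ν x) + infDist x {y | nnz y ≤ #(largeCoords ν x)} / ν ≤ Phi ν x := by
  rw [Phi_eq_card_add_sum_div hν]
  gcongr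
  exact infDist_setOf_nnz_le_card_le x _

section

variable (hν : 0 < ν) (hdist : ∀ s < k, ((k : ℝ) - s) * ν < infDist x {y | nnz y ≤ s})
include hν hdist

lemma natCast_lt_Phi_of_card_lt (hk : #(largeCoords ν x) < k) : (k : ℝ) < Phi ν x := by
  set a := #(largeCoords ν x)
  have : (k : ℝ) - a < infDist x {y | nnz y ≤ a} / ν := (lt_div_iff₀ hν).mpr (hdist a hk)
  linarith [card_add_infDist_div_le_Phi (x := x) hν]

lemma natCast_le_Phi : (k : ℝ) ≤ Phi ν x := by
  rcases lt_or_ge #(largeCoords ν x) k with hk | hk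
  · exact (natCast_lt_Phi_of_card_lt hν hdist hk).le
  · have : (k : ℝ) ≤ #(largeCoords ν x) := by exact_mod_cast hk
    have : 0 ≤ infDist x {y | nnz y ≤ #(largeCoords ν x)} / ν :=
      div_nonneg infDist_nonneg hν.le
    linarith [card_add_infDist_div_le_Phi (x := x) hν]

lemma Phi_eq_natCast_iff : Phi ν x = k ↔ nnz x = k := by
  refine ⟨fun hPhi => ?_, fun hnnz =>
    le_antisymm (hnnz ▸ Phi_le_nnz ν x) (natCast_le_Phi hν hdist)⟩
  set A := largeCoords ν x
  have hkA : k ≤ #A := not_lt.mp fun hk => (natCast_lt_Phi_of_card_lt hν hdist hk).ne' hPhi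
  have hdecomp := Phi_eq_card_add_sum_div (x := x) hν
  have hkA' : (k : ℝ) ≤ #A := by exact_mod_cast hkA
  have hrest : 0 ≤ (∑ i ∈ Aᶜ, |x i|) / ν := by positivity
  have hAk : #A ≤ k := by exact_mod_cast (by linarith : (#A : ℝ) ≤ k)
  have hsum : ∑ i ∈ Aᶜ, |x i| = 0 := by
    have : (∑ i ∈ Aᶜ, |x i|) / ν = 0 := by linarith
    simpa [hν.ne'] using this
  have hnnz_le : nnz x ≤ #A := nnz_le_card_of_eq_zero fun i hi => abs_eq_zero.mp <|
    (sum_eq_zero_iff_of_nonneg fun j _ => abs_nonneg (x j)).mp hsum i (mem_compl.mpr hi)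
  have hk_le : (k : ℝ) ≤ nnz x := hPhi ▸ Phi_le_nnz ν x
  exact le_antisymm (hnnz_le.trans hAk) (by exact_mod_cast hk_le)

end

end CappedL1

open Metric Set CappedL1

theorem stmt_0_general {n : ℕ}
    (S : Set (EuclideanSpace ℝ (Fin n)))
    (k : ℕ)
    (hkmin : ∀ x ∈ S, k ≤ nnz x) (hkatt : ∃ x ∈ S, nnz x = k)
    (Q : ℕ → Set (EuclideanSpace ℝ (Fin n)))
    (hQ : ∀ s, Q s = {x | nnz x ≤ s})
    (distSQ : ℕ → ℝ)
    (hdistSQ : ∀ s, distSQ s = sInf ((fun x => Metric.infDist x (Q s)) '' S))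
    (νbar : ℝ)
    (hνbar : νbar = sInf ((fun K : ℕ => (1 / (K : ℝ)) * distSQ (k - K)) '' Set.Icc 1 k))
    (ν : ℝ) (hν0 : 0 < ν) (hνlt : ν < νbar) :
    (∀ x ∈ S, (k : ℝ) ≤ Phi ν x) ∧
    (∀ x ∈ S, (Phi ν x = (k : ℝ) ↔ nnz x = k)) ∧
    (∀ x ∈ S, ((∀ y ∈ S, nnz x ≤ nnz y) ↔ (∀ y ∈ S, Phi ν x ≤ Phi ν y))) := by
  have hdistSQ_le : ∀ s, ∀ x ∈ S, distSQ s ≤ infDist x (Q s) := fun s x hx =>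
    hdistSQ s ▸ csInf_le ⟨0, by rintro _ ⟨z, -, rfl⟩; exact infDist_nonneg⟩
      (mem_image_of_mem _ hx)
  have hνbar_le : ∀ K ∈ Icc 1 k, νbar ≤ 1 / (K : ℝ) * distSQ (k - K) := fun K hK =>
    hνbar ▸ csInf_le ((finite_Icc 1 k).image _).bddBelow (mem_image_of_mem _ hK)
  have hdist : ∀ x ∈ S, ∀ s < k, ((k : ℝ) - s) * ν < infDist x {y | nnz y ≤ s} := by
    intro x hx s hs
    have hνs := hνlt.trans_le (hνbar_le (k - s) ⟨by omega, by omega⟩)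
    rw [Nat.sub_sub_self hs.le, Nat.cast_sub hs.le] at hνs
    have hks : (0 : ℝ) < k - s := sub_pos.mpr (by exact_mod_cast hs)
    calc ((k : ℝ) - s) * ν < (k - s) * (1 / (k - s) * distSQ s) := by gcongr
      _ = distSQ s := by field_simp
      _ ≤ infDist x {y | nnz y ≤ s} := hQ s ▸ hdistSQ_le s x hx
  have hle : ∀ x ∈ S, (k : ℝ) ≤ Phi ν x := fun x hx => natCast_le_Phi hν0 (hdist x hx)
  have heq : ∀ x ∈ S, Phi ν x = k ↔ nnz x = k := fun x hx =>
    Phi_eq_natCast_iff hν0 (hdist x hx)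
  exact ⟨hle, heq, fun x hx => forall_le_iff_forall_le_of_eq_iff hkmin hkatt hle heq hx⟩

theorem stmt_0 {n m : ℕ}
    (G H : EuclideanSpace ℝ (Fin n) → Fin m → ℝ)
    (hG : Continuous G) (hH : Continuous H)
    (S : Set (EuclideanSpace ℝ (Fin n)))
    (hS : S = {x | (∀ i, 0 ≤ G x i) ∧ (∀ i, 0 ≤ H x i) ∧ ∑ i, G x i * H x i = 0})
    (hSne : S.Nonempty) (h0S : (0 : EuclideanSpace ℝ (Fin n)) ∉ S)
    (k : ℕ)
    (hkmin : ∀ x ∈ S, k ≤ nnz x) (hkatt : ∃ x ∈ S, nnz x = k)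
    (Q : ℕ → Set (EuclideanSpace ℝ (Fin n)))
    (hQ : ∀ s, Q s = {x | nnz x ≤ s})
    (distSQ : ℕ → ℝ)
    (hdistSQ : ∀ s, distSQ s = sInf ((fun x => Metric.infDist x (Q s)) '' S))
    (hpos : ∀ K, 1 ≤ K → K ≤ k → 0 < distSQ (k - K))
    (νbar : ℝ)
    (hνbar : νbar = sInf ((fun K : ℕ => (1 / (K : ℝ)) * distSQ (k - K)) '' Set.Icc 1 k))
    (ν : ℝ) (hν0 : 0 < ν) (hνlt : ν < νbar) :
    (∀ x ∈ S, (k : ℝ) ≤ Phi ν x) ∧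
    (∀ x ∈ S, (Phi ν x = (k : ℝ) ↔ nnz x = k)) ∧
    (∀ x ∈ S, ((∀ y ∈ S, nnz x ≤ nnz y) ↔ (∀ y ∈ S, Phi ν x ≤ Phi ν y))) :=
  stmt_0_general S k hkmin hkatt Q hQ distSQ hdistSQ νbar hνbar ν hν0 hνlt
end

section
/- Let M ∈ ℝ^{m×m} be copositive-plus and let q ∈ ℝ^m satisfy {z ∈ ℝ^m : (M + Mᵀ)z = 0} ⊆ {z ∈ ℝ^m : qᵀ z = 0}. Then the quadratic function f(y) = yᵀ(My + q) is bounded below on the nonnegative orthant {y ∈ ℝ^m : y ≥ 0}. -/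
/-!
Write `f y = yᵀ(My + q)`. If the form vanishes at some `z ≥ 0, z ≠ 0`, copositivity-plus and the
kernel inclusion give `(M + Mᵀ)z = 0` and `qᵀz = 0`, so `f` is invariant under `y ↦ y - t • z`;
sliding `y` along `-z` until a coordinate vanishes reduces the bound to a proper face of the
orthant. On a face without such a `z` the form is strictly copositive, hence at least
`μ (∑ yᵢ)²` for some `μ > 0` by compactness of the simplex, and this dominates the linear term.
-/

open Matrix Finset

variable {ι : Type*}

def orthantFace (S : Finset ι) : Set (ι → ℝ) :=
  {y | (∀ i, 0 ≤ y i) ∧ ∀ i ∉ S, y i = 0}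

lemma smul_mem_orthantFace {S : Finset ι} {c : ℝ} (hc : 0 ≤ c) {y : ι → ℝ}
    (hy : y ∈ orthantFace S) : c • y ∈ orthantFace S :=
  ⟨fun i => mul_nonneg hc (hy.1 i), fun i hi => by simp [hy.2 i hi]⟩

lemma isClosed_orthantFace (S : Finset ι) : IsClosed (orthantFace S) := by
  simp only [orthantFace, Set.ofPred_and, Set.ofPred_forall]
  exact (isClosed_iInter fun i => isClosed_le continuous_const (continuous_apply i)).inter
    (isClosed_iInter fun i => isClosed_iInter fun _ =>
      isClosed_eq (continuous_apply i) continuous_const)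

variable [Fintype ι]

lemma smul_dotProduct_mulVec_smul {R : Type*} [CommRing R] (M : Matrix ι ι R) (c : R)
    (y : ι → R) : (c • y) ⬝ᵥ M *ᵥ (c • y) = c ^ 2 * (y ⬝ᵥ M *ᵥ y) := by
  simp only [mulVec_smul, dotProduct_smul, smul_dotProduct, smul_eq_mul]
  ring

lemma exists_pos_mul_sq_sum_le_of_strictlyCopositiveOn (M : Matrix ι ι ℝ) (S : Finset ι)
    (hM : ∀ z ∈ orthantFace S, z ≠ 0 → 0 < z ⬝ᵥ M *ᵥ z) :
    ∃ μ > 0, ∀ y ∈ orthantFace S, μ * (∑ i, y i) ^ 2 ≤ y ⬝ᵥ M *ᵥ y := by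
  have hK : IsCompact (orthantFace S ∩ stdSimplex ℝ ι) :=
    (isCompact_stdSimplex ℝ ι).inter_left (isClosed_orthantFace S)
  have hcont : Continuous fun v : ι → ℝ => v ⬝ᵥ M *ᵥ v := by
    simp only [dotProduct, mulVec]
    fun_prop
  have hpos : ∀ z ∈ orthantFace S ∩ stdSimplex ℝ ι, 0 < z ⬝ᵥ M *ᵥ z := by
    rintro z ⟨hzS, -, hz1⟩
    refine hM z hzS fun hz0 => ?_
    simp [hz0] at hz1
  obtain ⟨μ, hμ, hμK⟩ := hK.exists_forall_le' hcont.continuousOn hpos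
  refine ⟨μ, hμ, fun y hy => ?_⟩
  set s := ∑ i, y i
  rcases (sum_nonneg fun i _ => hy.1 i : 0 ≤ s).eq_or_lt with hs | hs
  · have hy0 : y = 0 := funext fun i =>
      (sum_eq_zero_iff_of_nonneg fun i _ => hy.1 i).mp hs.symm i (mem_univ i)
    simp [show s = 0 from hs.symm, hy0]
  · have hsimplex : s⁻¹ • y ∈ stdSimplex ℝ ι :=
      ⟨fun i => mul_nonneg (inv_nonneg.mpr hs.le) (hy.1 i), by
        simp only [Pi.smul_apply, smul_eq_mul, ← mul_sum]
        exact inv_mul_cancel₀ hs.ne'⟩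
    have h := hμK _ ⟨smul_mem_orthantFace (inv_nonneg.mpr hs.le) hy, hsimplex⟩
    rw [smul_dotProduct_mulVec_smul, inv_pow, inv_mul_eq_div, le_div_iff₀ (by positivity)] at h
    exact h

lemma neg_mul_sum_le_dotProduct (q y : ι → ℝ) (hy : ∀ i, 0 ≤ y i) :
    -((∑ i, |q i|) * ∑ i, y i) ≤ y ⬝ᵥ q := by
  rw [mul_sum, ← sum_neg_distrib]
  refine sum_le_sum fun i _ => ?_
  have hqi : |q i| ≤ ∑ j, |q j| := single_le_sum (fun j _ => abs_nonneg (q j)) (mem_univ i)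
  nlinarith [hy i, neg_abs_le (q i)]

lemma exists_le_of_strictlyCopositiveOn (M : Matrix ι ι ℝ) (q : ι → ℝ) (S : Finset ι)
    (hM : ∀ z ∈ orthantFace S, z ≠ 0 → 0 < z ⬝ᵥ M *ᵥ z) :
    ∃ c, ∀ y ∈ orthantFace S, c ≤ y ⬝ᵥ (M *ᵥ y + q) := by
  obtain ⟨μ, hμ, hquad⟩ := exists_pos_mul_sq_sum_le_of_strictlyCopositiveOn M S hM
  set Q := ∑ i, |q i|
  refine ⟨-Q ^ 2 / (4 * μ), fun y hy => ?_⟩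
  set s := ∑ i, y i
  have hlin := neg_mul_sum_le_dotProduct q y hy.1
  -- completing the square
  have hsq : -Q ^ 2 / (4 * μ) ≤ μ * s ^ 2 - Q * s := by
    rw [div_le_iff₀ (by positivity)]
    nlinarith [sq_nonneg (2 * μ * s - Q)]
  rw [dotProduct_add]
  linarith [hquad y hy]

lemma sub_smul_dotProduct_mulVec_add {R : Type*} [CommRing R] (M : Matrix ι ι R)
    (q y z : ι → R) (t : R) (hN : (M + Mᵀ) *ᵥ z = 0) (hq : q ⬝ᵥ z = 0)
    (hz : z ⬝ᵥ M *ᵥ z = 0) :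
    (y - t • z) ⬝ᵥ (M *ᵥ (y - t • z) + q) = y ⬝ᵥ (M *ᵥ y + q) := by
  have hcross : y ⬝ᵥ M *ᵥ z + z ⬝ᵥ M *ᵥ y = 0 := by
    rw [dotProduct_mulVec z, ← mulVec_transpose, dotProduct_comm, ← add_dotProduct,
      ← add_mulVec, hN, zero_dotProduct]
  rw [dotProduct_comm] at hq
  simp only [mulVec_sub, mulVec_smul, dotProduct_add, dotProduct_sub, sub_dotProduct,
    smul_dotProduct, dotProduct_smul, smul_eq_mul]
  linear_combination (-t) * hcross + t ^ 2 * hz - t * hq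

lemma exists_sub_smul_mem_orthantFace_erase [DecidableEq ι] {S : Finset ι} {y z : ι → ℝ}
    (hy : y ∈ orthantFace S) (hz : z ∈ orthantFace S) (hz0 : z ≠ 0) :
    ∃ j ∈ S, ∃ t : ℝ, y - t • z ∈ orthantFace (S.erase j) := by
  set T := univ.filter fun i => 0 < z i
  obtain ⟨i₀, hi₀⟩ : ∃ i, 0 < z i := by
    by_contra! h
    exact hz0 (funext fun i => le_antisymm (h i) (hz.1 i))
  have hT : T.Nonempty := ⟨i₀, mem_filter.mpr ⟨mem_univ i₀, hi₀⟩⟩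
  -- the largest step along `-z` that stays in the orthant is attained at the minimal ratio
  obtain ⟨j, hjT, hjmin⟩ := T.exists_min_image (fun i => y i / z i) hT
  have hzj : 0 < z j := (mem_filter.mp hjT).2
  have hjS : j ∈ S := by
    by_contra hj
    exact hzj.ne' (hz.2 j hj)
  refine ⟨j, hjS, y j / z j, fun i => ?_, fun i hi => ?_⟩
  · rcases (hz.1 i).lt_or_eq with hzi | hzi
    · have := hjmin i (mem_filter.mpr ⟨mem_univ i, hzi⟩)
      rw [le_div_iff₀ hzi] at this
      simpa using this
    · simp [← hzi, hy.1 i]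
  · rcases eq_or_ne i j with rfl | hij
    · simp [div_mul_cancel₀ _ hzj.ne']
    · have hiS : i ∉ S := fun h => hi (mem_erase.mpr ⟨hij, h⟩)
      simp [hy.2 i hiS, hz.2 i hiS]

theorem exists_le_dotProduct_mulVec_add_on_orthantFace (M : Matrix ι ι ℝ) (q : ι → ℝ)
    (hcopos : ∀ z : ι → ℝ, (∀ i, 0 ≤ z i) → 0 ≤ z ⬝ᵥ M *ᵥ z)
    (hplus : ∀ z : ι → ℝ, (∀ i, 0 ≤ z i) → z ⬝ᵥ M *ᵥ z = 0 → (M + Mᵀ) *ᵥ z = 0)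
    (hker : ∀ z : ι → ℝ, (M + Mᵀ) *ᵥ z = 0 → q ⬝ᵥ z = 0) (S : Finset ι) :
    ∃ c, ∀ y ∈ orthantFace S, c ≤ y ⬝ᵥ (M *ᵥ y + q) := by
  classical
  induction S using Finset.strongInduction with
  | H S ih =>
  by_cases hdeg : ∃ z ∈ orthantFace S, z ≠ 0 ∧ z ⬝ᵥ M *ᵥ z = 0
  · obtain ⟨z, hzS, hz0, hzM⟩ := hdeg
    have hN := hplus z hzS.1 hzM
    choose! c hc using fun j (hj : j ∈ S) => ih _ (erase_ssubset hj)
    obtain ⟨b, hb⟩ := (S.finite_toSet.image c).bddBelow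
    refine ⟨b, fun y hy => ?_⟩
    obtain ⟨j, hj, t, hyt⟩ := exists_sub_smul_mem_orthantFace_erase hy hzS hz0
    calc b ≤ c j := hb ⟨j, hj, rfl⟩
      _ ≤ (y - t • z) ⬝ᵥ (M *ᵥ (y - t • z) + q) := hc j hj _ hyt
      _ = y ⬝ᵥ (M *ᵥ y + q) := sub_smul_dotProduct_mulVec_add M q y z t hN (hker z hN) hzM
  · push Not at hdeg
    exact exists_le_of_strictlyCopositiveOn M q S fun z hz hz0 =>
      (hcopos z hz.1).lt_of_ne' (hdeg z hz hz0)

theorem stmt_7 {m : ℕ}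
    (M : Matrix (Fin m) (Fin m) ℝ) (q : Fin m → ℝ)
    -- `M` is copositive:
    (hcopos : ∀ z : Fin m → ℝ, (∀ i, 0 ≤ z i) → 0 ≤ z ⬝ᵥ M.mulVec z)
    -- `M` is copositive-plus:
    (hplus : ∀ z : Fin m → ℝ, (∀ i, 0 ≤ z i) → z ⬝ᵥ M.mulVec z = 0 → (M + Mᵀ).mulVec z = 0)
    -- kernel inclusion:
    (hker : ∀ z : Fin m → ℝ, (M + Mᵀ).mulVec z = 0 → q ⬝ᵥ z = 0) :
    ∃ c : ℝ, ∀ y : Fin m → ℝ, (∀ i, 0 ≤ y i) → c ≤ y ⬝ᵥ (M.mulVec y + q) := by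
  obtain ⟨c, hc⟩ := exists_le_dotProduct_mulVec_add_on_orthantFace M q hcopos hplus hker univ
  exact ⟨c, fun y hy => hc y ⟨hy, by simp⟩⟩
end

section
/- Let A, C ∈ ℝ^{m×n} with C of full row rank m, let b, d ∈ ℝ^m, set M = A Cᵀ (C Cᵀ)⁻¹, and let x₀ ∈ ℝ^n satisfy Ax₀ − b ≥ 0 and Cx₀ − d ≥ 0. Suppose y₀ ∈ ℝ^m satisfies the linear complementarity conditions y₀ ≥ 0, M y₀ + M d − M C x₀ + A x₀ − b ≥ 0, and y₀ᵀ(M y₀ + M d − M C x₀ + A x₀ − b) = 0. Then the point x̄ = Cᵀ(C Cᵀ)⁻¹ (y₀ + d) + (Iₙ − Cᵀ(C Cᵀ)⁻¹ C) x₀ satisfies C x̄ − d = y₀, A x̄ − b = M y₀ + M d − M C x₀ + A x₀ − b, and hence A x̄ − b ≥ 0, C x̄ − d ≥ 0, (A x̄ − b)ᵀ(C x̄ − d) = 0, i.e., x̄ is a solution of the vertical linear complementarity system. -/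
open scoped BigOperators
open Matrix

theorem stmt_8 {m n : ℕ}
    (A C : Matrix (Fin m) (Fin n) ℝ) (b d : Fin m → ℝ)
    (hrank : C.rank = m)
    (M : Matrix (Fin m) (Fin m) ℝ) (hM : M = A * Cᵀ * (C * Cᵀ)⁻¹)
    (x₀ : Fin n → ℝ) (hx₀A : ∀ i, 0 ≤ (A.mulVec x₀ - b) i) (hx₀C : ∀ i, 0 ≤ (C.mulVec x₀ - d) i)
    (y₀ : Fin m → ℝ)
    (hy₀nonneg : ∀ i, 0 ≤ y₀ i)
    (hw : ∀ i, 0 ≤ (M.mulVec y₀ + M.mulVec d - M.mulVec (C.mulVec x₀) + A.mulVec x₀ - b) i)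
    (hcomp : y₀ ⬝ᵥ (M.mulVec y₀ + M.mulVec d - M.mulVec (C.mulVec x₀) + A.mulVec x₀ - b) = 0)
    (xbar : Fin n → ℝ)
    (hxbar : xbar = (Cᵀ * (C * Cᵀ)⁻¹).mulVec (y₀ + d) + x₀ - (Cᵀ * (C * Cᵀ)⁻¹ * C).mulVec x₀) :
    C.mulVec xbar - d = y₀ ∧
    A.mulVec xbar - b = M.mulVec y₀ + M.mulVec d - M.mulVec (C.mulVec x₀) + A.mulVec x₀ - b ∧
    (∀ i, 0 ≤ (A.mulVec xbar - b) i) ∧ (∀ i, 0 ≤ (C.mulVec xbar - d) i) ∧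
    ∑ i, (A.mulVec xbar - b) i * (C.mulVec xbar - d) i = 0 := by
  -- C * Cᵀ is invertible
  have hrk : (C * Cᵀ).rank = m := by rw [C.rank_self_mul_transpose, hrank]
  have hU : IsUnit (C * Cᵀ) := by
    rw [← Matrix.mulVec_surjective_iff_isUnit]
    have hrange : LinearMap.range (C * Cᵀ).mulVecLin = ⊤ := by
      apply Submodule.eq_top_of_finrank_eq
      have : Module.finrank ℝ ↥(LinearMap.range (C * Cᵀ).mulVecLin) = m := hrk
      rw [this]
      simp
    intro v
    obtain ⟨w, hw'⟩ := (LinearMap.range_eq_top.mp hrange) v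
    exact ⟨w, hw'⟩
  have h1 : (C * Cᵀ) * (C * Cᵀ)⁻¹ = 1 :=
    Matrix.mul_nonsing_inv _ ((Matrix.isUnit_iff_isUnit_det _).mp hU)
  have hCG : C * (Cᵀ * (C * Cᵀ)⁻¹) = 1 := by rw [← Matrix.mul_assoc]; exact h1
  have hC : C.mulVec xbar - d = y₀ := by
    rw [hxbar]
    rw [Matrix.mulVec_sub, Matrix.mulVec_add, Matrix.mulVec_mulVec, hCG,
      Matrix.one_mulVec, Matrix.mulVec_mulVec, ← Matrix.mul_assoc, hCG, Matrix.one_mul]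
    ext i
    simp
  have hAG : A * (Cᵀ * (C * Cᵀ)⁻¹) = M := by rw [hM, Matrix.mul_assoc]
  have hA : A.mulVec xbar - b = M.mulVec y₀ + M.mulVec d - M.mulVec (C.mulVec x₀) + A.mulVec x₀ - b := by
    rw [hxbar]
    rw [Matrix.mulVec_sub, Matrix.mulVec_add, Matrix.mulVec_mulVec, hAG,
      Matrix.mulVec_mulVec, ← Matrix.mul_assoc, hAG]
    rw [Matrix.mulVec_add, ← Matrix.mulVec_mulVec]
    ext i
    simp
    ring
  refine ⟨hC, hA, ?_, ?_, ?_⟩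
  · intro i; rw [hA]; exact hw i
  · intro i; rw [hC]; exact hy₀nonneg i
  · rw [hA, hC]
    rw [← hcomp, dotProduct]
    exact Finset.sum_congr rfl fun i _ => mul_comm _ _
end

section
/- Let A, C ∈ ℝ^{m×n} with C of full row rank m, let b, d ∈ ℝ^m, and set M = A Cᵀ (C Cᵀ)⁻¹. Suppose ȳ ∈ ℝ^m satisfies the linear complementarity conditions ȳ ≥ 0, M ȳ + M d − b ≥ 0, and ȳᵀ(M ȳ + M d − b) = 0. Then the point x̃ = Cᵀ(C Cᵀ)⁻¹ (ȳ + d) satisfies C x̃ − d = ȳ ≥ 0, A x̃ − b = M ȳ + M d − b ≥ 0, and (A x̃ − b)ᵀ(C x̃ − d) = 0, i.e., x̃ is a solution of the vertical linear complementarity system. -/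
open scoped BigOperators
open Matrix

lemma isUnit_det_of_rank_eq {m : ℕ} (S : Matrix (Fin m) (Fin m) ℝ) (h : S.rank = m) :
    IsUnit S.det := by
  rw [isUnit_iff_ne_zero]
  intro hdet
  rw [← Matrix.exists_mulVec_eq_zero_iff] at hdet
  obtain ⟨v, hv, hSv⟩ := hdet
  have hker : v ∈ LinearMap.ker S.mulVecLin := by simpa using hSv
  have hrn := LinearMap.finrank_range_add_finrank_ker S.mulVecLin
  rw [Matrix.rank] at h
  simp only [Module.finrank_fin_fun] at hrn
  rw [h] at hrn
  have hker0 : Module.finrank ℝ (LinearMap.ker S.mulVecLin) = 0 := by omega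
  rw [Submodule.finrank_eq_zero] at hker0
  rw [hker0] at hker
  exact hv (by simpa using hker)

theorem stmt_9 {m n : ℕ}
    (A C : Matrix (Fin m) (Fin n) ℝ) (b d : Fin m → ℝ)
    (hrank : C.rank = m)
    (M : Matrix (Fin m) (Fin m) ℝ) (hM : M = A * Cᵀ * (C * Cᵀ)⁻¹)
    (ybar : Fin m → ℝ)
    (hynonneg : ∀ i, 0 ≤ ybar i)
    (hw : ∀ i, 0 ≤ (M.mulVec ybar + M.mulVec d - b) i)
    (hcomp : ybar ⬝ᵥ (M.mulVec ybar + M.mulVec d - b) = 0)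
    (xtilde : Fin n → ℝ)
    (hxtilde : xtilde = (Cᵀ * (C * Cᵀ)⁻¹).mulVec (ybar + d)) :
    C.mulVec xtilde - d = ybar ∧
    A.mulVec xtilde - b = M.mulVec ybar + M.mulVec d - b ∧
    (∀ i, 0 ≤ (A.mulVec xtilde - b) i) ∧ (∀ i, 0 ≤ (C.mulVec xtilde - d) i) ∧
    ∑ i, (A.mulVec xtilde - b) i * (C.mulVec xtilde - d) i = 0 := by
  have hdet : IsUnit (C * Cᵀ).det := by
    apply isUnit_det_of_rank_eq
    rw [Matrix.rank_self_mul_transpose, hrank]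
  have h1 : C.mulVec xtilde - d = ybar := by
    rw [hxtilde, Matrix.mulVec_mulVec, ← Matrix.mul_assoc,
      Matrix.mul_nonsing_inv _ hdet, Matrix.one_mulVec]
    abel
  have h2 : A.mulVec xtilde - b = M.mulVec ybar + M.mulVec d - b := by
    rw [hxtilde, Matrix.mulVec_mulVec, ← Matrix.mul_assoc, ← hM, Matrix.mulVec_add]
  refine ⟨h1, h2, ?_, ?_, ?_⟩
  · rw [h2]; exact hw
  · rw [h1]; exact hynonneg
  · rw [h1, h2, ← dotProduct, dotProduct_comm]
    exact hcomp
end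

section
/- Let A, C ∈ ℝ^{m×n} and b, d ∈ ℝ^m. Assume AᵀC is positive semi-definite, i.e., xᵀ AᵀC x ≥ 0 for all x ∈ ℝ^n, and assume the vertical linear complementarity system has a solution x*. Then the solution set S = {x ∈ ℝ^n : Ax − b ≥ 0, Cx − d ≥ 0, (Ax − b)ᵀ(Cx − d) = 0} equals the set S̄ = {x ∈ ℝ^n : Ax − b ≥ 0, Cx − d ≥ 0, (AᵀC + CᵀA)(x − x*) = 0, (bᵀC + dᵀA)(x − x*) = 0}. In particular, S is a convex polyhedral set. -/
open scoped BigOperators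
open Matrix

private lemma psd_symm_kernel {n : ℕ} (M : Matrix (Fin n) (Fin n) ℝ)
    (hsym : Mᵀ = M) (hpsd : ∀ x, 0 ≤ x ⬝ᵥ M.mulVec x)
    (q : Fin n → ℝ) (hq : q ⬝ᵥ M.mulVec q = 0) : M.mulVec q = 0 := by
  have hsymm : ∀ u v : Fin n → ℝ, u ⬝ᵥ M.mulVec v = v ⬝ᵥ M.mulVec u := by
    intro u v
    rw [dotProduct_mulVec, ← mulVec_transpose, hsym, dotProduct_comm]
  have key : ∀ y : Fin n → ℝ, y ⬝ᵥ M.mulVec q = 0 := by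
    intro y
    set a := y ⬝ᵥ M.mulVec y with ha
    set c := y ⬝ᵥ M.mulVec q with hc
    have ha0 : 0 ≤ a := hpsd y
    by_contra hcne
    set t : ℝ := -c / (a + 1) with ht
    have h := hpsd (q + t • y)
    have hexp : (q + t • y) ⬝ᵥ M.mulVec (q + t • y)
        = q ⬝ᵥ M.mulVec q + t * (q ⬝ᵥ M.mulVec y) + t * (y ⬝ᵥ M.mulVec q)
          + t ^ 2 * (y ⬝ᵥ M.mulVec y) := by
      simp only [mulVec_add, mulVec_smul, dotProduct_add, add_dotProduct,
        dotProduct_smul, smul_dotProduct, smul_eq_mul]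
      ring
    rw [hexp, hq, hsymm q y, ← hc, ← ha] at h
    have ha1 : 0 < a + 1 := by linarith
    have hceq : t = -c / (a + 1) := ht
    have hc2 : 0 < c ^ 2 := by positivity
    have : 0 ≤ 0 + (-c / (a + 1)) * c + (-c / (a + 1)) * c + (-c / (a + 1)) ^ 2 * a := by
      rw [← hceq]; linarith [h]
    have hmul : 0 ≤ (0 + -c / (a + 1) * c + -c / (a + 1) * c + (-c / (a + 1)) ^ 2 * a)
        * (a + 1) ^ 2 := mul_nonneg this (sq_nonneg _)
    have heq : (0 + -c / (a + 1) * c + -c / (a + 1) * c + (-c / (a + 1)) ^ 2 * a)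
        * (a + 1) ^ 2 = -2 * c ^ 2 * (a + 1) + c ^ 2 * a := by
      field_simp
      ring
    rw [heq] at hmul
    nlinarith [mul_nonneg (le_of_lt hc2) ha0]
  have h0 := key (M.mulVec q)
  exact dotProduct_self_eq_zero.mp h0

theorem stmt_10 {m n : ℕ}
    (A C : Matrix (Fin m) (Fin n) ℝ) (b d : Fin m → ℝ)
    (hpsd : ∀ x : Fin n → ℝ, 0 ≤ x ⬝ᵥ (Aᵀ * C).mulVec x)
    (xstar : Fin n → ℝ)
    (hxstar : (∀ i, 0 ≤ (A.mulVec xstar - b) i) ∧ (∀ i, 0 ≤ (C.mulVec xstar - d) i) ∧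
      ∑ i, (A.mulVec xstar - b) i * (C.mulVec xstar - d) i = 0)
    (S Sbar : Set (Fin n → ℝ))
    (hS : S = {x | (∀ i, 0 ≤ (A.mulVec x - b) i) ∧ (∀ i, 0 ≤ (C.mulVec x - d) i) ∧
      ∑ i, (A.mulVec x - b) i * (C.mulVec x - d) i = 0})
    (hSbar : Sbar = {x | (∀ i, 0 ≤ (A.mulVec x - b) i) ∧ (∀ i, 0 ≤ (C.mulVec x - d) i) ∧
      (Aᵀ * C + Cᵀ * A).mulVec (x - xstar) = 0 ∧
      (C.vecMul b + A.vecMul d) ⬝ᵥ (x - xstar) = 0}) :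
    S = Sbar ∧ Convex ℝ S := by
  -- generic quadratic-form identity
  have keyq : ∀ (P Q : Matrix (Fin m) (Fin n) ℝ) (p r : Fin n → ℝ),
      p ⬝ᵥ (Pᵀ * Q).mulVec r = P.mulVec p ⬝ᵥ Q.mulVec r := by
    intro P Q p r
    rw [← mulVec_mulVec, dotProduct_mulVec, vecMul_transpose]
  set M : Matrix (Fin n) (Fin n) ℝ := Aᵀ * C + Cᵀ * A with hM
  have hMsym : Mᵀ = M := by
    rw [hM, transpose_add, transpose_mul, transpose_mul, transpose_transpose,
      transpose_transpose, add_comm]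
  have hMdouble : ∀ p : Fin n → ℝ, p ⬝ᵥ M.mulVec p = 2 * (p ⬝ᵥ (Aᵀ * C).mulVec p) := by
    intro p
    rw [hM, add_mulVec, dotProduct_add, keyq, keyq, dotProduct_comm (C.mulVec p)]
    ring
  have hMpsd : ∀ p : Fin n → ℝ, 0 ≤ p ⬝ᵥ M.mulVec p := by
    intro p
    rw [hMdouble]
    linarith [hpsd p]
  have hMsymm : ∀ u v : Fin n → ℝ, u ⬝ᵥ M.mulVec v = v ⬝ᵥ M.mulVec u := by
    intro u v
    rw [dotProduct_mulVec, ← mulVec_transpose, hMsym, dotProduct_comm]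
  obtain ⟨hs1, hs2, hs3⟩ := hxstar
  have hs3' : (A.mulVec xstar - b) ⬝ᵥ (C.mulVec xstar - d) = 0 := hs3
  -- cross-term identity: for q = x - xstar,
  -- A.mulVec q ⬝ᵥ (C.mulVec xstar - d) + (A.mulVec xstar - b) ⬝ᵥ C.mulVec q
  --   = xstar ⬝ᵥ M.mulVec q - ((C.vecMul b + A.vecMul d) ⬝ᵥ q)
  have hcross : ∀ q : Fin n → ℝ,
      A.mulVec q ⬝ᵥ (C.mulVec xstar - d) + (A.mulVec xstar - b) ⬝ᵥ C.mulVec q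
        = xstar ⬝ᵥ M.mulVec q - ((C.vecMul b + A.vecMul d) ⬝ᵥ q) := by
    intro q
    have e1 : A.mulVec q ⬝ᵥ C.mulVec xstar = q ⬝ᵥ (Aᵀ * C).mulVec xstar := (keyq A C q xstar).symm
    have e2 : A.mulVec xstar ⬝ᵥ C.mulVec q = q ⬝ᵥ (Cᵀ * A).mulVec xstar := by
      rw [keyq C A q xstar, dotProduct_comm]
    have e3 : xstar ⬝ᵥ M.mulVec q = q ⬝ᵥ M.mulVec xstar := hMsymm xstar q
    have e4 : q ⬝ᵥ M.mulVec xstar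
        = q ⬝ᵥ (Aᵀ * C).mulVec xstar + q ⬝ᵥ (Cᵀ * A).mulVec xstar := by
      rw [hM, add_mulVec, dotProduct_add]
    have e5 : A.mulVec q ⬝ᵥ d = d ⬝ᵥ A.mulVec q := dotProduct_comm _ _
    have e6 : (C.vecMul b + A.vecMul d) ⬝ᵥ q = b ⬝ᵥ C.mulVec q + d ⬝ᵥ A.mulVec q := by
      rw [add_dotProduct, ← dotProduct_mulVec, ← dotProduct_mulVec]
    have e7 : (A.mulVec xstar - b) ⬝ᵥ C.mulVec q
        = A.mulVec xstar ⬝ᵥ C.mulVec q - b ⬝ᵥ C.mulVec q := sub_dotProduct _ _ _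
    have e8 : A.mulVec q ⬝ᵥ (C.mulVec xstar - d)
        = A.mulVec q ⬝ᵥ C.mulVec xstar - A.mulVec q ⬝ᵥ d := dotProduct_sub _ _ _
    rw [e7, e8, e1, e2, e3, e4, e5, e6]; ring
  have hdiffA : ∀ x : Fin n → ℝ,
      A.mulVec (x - xstar) = (A.mulVec x - b) - (A.mulVec xstar - b) := by
    intro x; rw [mulVec_sub]; abel
  have hdiffC : ∀ x : Fin n → ℝ,
      C.mulVec (x - xstar) = (C.mulVec x - d) - (C.mulVec xstar - d) := by
    intro x; rw [mulVec_sub]; abel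
  have hSeq : S = Sbar := by
    rw [hS, hSbar]
    ext x
    simp only [Set.mem_setOf_eq]
    constructor
    · rintro ⟨h1, h2, h3⟩
      refine ⟨h1, h2, ?_⟩
      have h3' : (A.mulVec x - b) ⬝ᵥ (C.mulVec x - d) = 0 := h3
      set q : Fin n → ℝ := x - xstar with hq
      have hT : q ⬝ᵥ (Aᵀ * C).mulVec q
          = (A.mulVec x - b) ⬝ᵥ (C.mulVec x - d)
            - (A.mulVec x - b) ⬝ᵥ (C.mulVec xstar - d)
            - (A.mulVec xstar - b) ⬝ᵥ (C.mulVec x - d)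
            + (A.mulVec xstar - b) ⬝ᵥ (C.mulVec xstar - d) := by
        rw [keyq, hq, hdiffA, hdiffC]
        simp only [sub_dotProduct, dotProduct_sub]
        ring
      have hnn1 : 0 ≤ (A.mulVec x - b) ⬝ᵥ (C.mulVec xstar - d) :=
        Finset.sum_nonneg fun i _ => mul_nonneg (h1 i) (hs2 i)
      have hnn2 : 0 ≤ (A.mulVec xstar - b) ⬝ᵥ (C.mulVec x - d) :=
        Finset.sum_nonneg fun i _ => mul_nonneg (hs1 i) (h2 i)
      have hTnn : 0 ≤ q ⬝ᵥ (Aᵀ * C).mulVec q := hpsd q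
      have h4 : (A.mulVec x - b) ⬝ᵥ (C.mulVec xstar - d) = 0 := by
        rw [hT, h3', hs3'] at hTnn; linarith
      have h5 : (A.mulVec xstar - b) ⬝ᵥ (C.mulVec x - d) = 0 := by
        rw [hT, h3', hs3'] at hTnn; linarith
      have h6 : q ⬝ᵥ (Aᵀ * C).mulVec q = 0 := by
        rw [hT, h3', hs3', h4, h5]; ring
      have hMq0 : q ⬝ᵥ M.mulVec q = 0 := by rw [hMdouble, h6]; ring
      have hMker : M.mulVec q = 0 := psd_symm_kernel M hMsym hMpsd q hMq0
      refine ⟨hMker, ?_⟩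
      have hAqvs : A.mulVec q ⬝ᵥ (C.mulVec xstar - d) = 0 := by
        rw [hq, hdiffA, sub_dotProduct, h4, hs3']; ring
      have husCq : (A.mulVec xstar - b) ⬝ᵥ C.mulVec q = 0 := by
        rw [hq, hdiffC, dotProduct_sub, h5, hs3']; ring
      have hc := hcross q
      rw [hAqvs, husCq, hMker, dotProduct_zero] at hc
      linarith
    · rintro ⟨h1, h2, hMker, hlin⟩
      refine ⟨h1, h2, ?_⟩
      show (A.mulVec x - b) ⬝ᵥ (C.mulVec x - d) = 0
      set q : Fin n → ℝ := x - xstar with hq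
      have h6 : q ⬝ᵥ (Aᵀ * C).mulVec q = 0 := by
        have : q ⬝ᵥ M.mulVec q = 0 := by rw [hMker, dotProduct_zero]
        rw [hMdouble] at this; linarith
      have hc := hcross q
      rw [hMker, dotProduct_zero, hlin] at hc
      have hx : A.mulVec x - b = (A.mulVec xstar - b) + A.mulVec q := by
        rw [hq, hdiffA]; abel
      have hy : C.mulVec x - d = (C.mulVec xstar - d) + C.mulVec q := by
        rw [hq, hdiffC]; abel
      have hAqCq : A.mulVec q ⬝ᵥ C.mulVec q = 0 := by rw [← keyq]; exact h6
      rw [hx, hy, add_dotProduct, dotProduct_add, dotProduct_add, hs3', hAqCq]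
      linarith
  refine ⟨hSeq, ?_⟩
  rw [hSeq, hSbar]
  intro x hx y hy a c ha hc hac
  simp only [Set.mem_setOf_eq] at hx hy ⊢
  obtain ⟨hx1, hx2, hx3, hx4⟩ := hx
  obtain ⟨hy1, hy2, hy3, hy4⟩ := hy
  have hz : a • x + c • y - xstar = a • (x - xstar) + c • (y - xstar) := by
    funext i
    simp only [Pi.add_apply, Pi.sub_apply, Pi.smul_apply, smul_eq_mul]
    linear_combination (xstar i) * hac
  refine ⟨?_, ?_, ?_, ?_⟩
  · intro i
    have e : (A.mulVec (a • x + c • y) - b) i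
        = a * ((A.mulVec x - b) i) + c * ((A.mulVec y - b) i) := by
      simp only [mulVec_add, mulVec_smul, Pi.add_apply, Pi.sub_apply, Pi.smul_apply,
        smul_eq_mul]
      linear_combination (b i) * hac
    rw [e]
    exact add_nonneg (mul_nonneg ha (hx1 i)) (mul_nonneg hc (hy1 i))
  · intro i
    have e : (C.mulVec (a • x + c • y) - d) i
        = a * ((C.mulVec x - d) i) + c * ((C.mulVec y - d) i) := by
      simp only [mulVec_add, mulVec_smul, Pi.add_apply, Pi.sub_apply, Pi.smul_apply,
        smul_eq_mul]
      linear_combination (d i) * hac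
    rw [e]
    exact add_nonneg (mul_nonneg ha (hx2 i)) (mul_nonneg hc (hy2 i))
  · rw [hz, mulVec_add, mulVec_smul, mulVec_smul, hx3, hy3, smul_zero, smul_zero, add_zero]
  · rw [hz, dotProduct_add, dotProduct_smul, dotProduct_smul, hx4, hy4, smul_zero,
      smul_zero, add_zero]
end

section
/- Let A, C ∈ ℝ^{m×n} and b, d ∈ ℝ^m, and assume AᵀC is positive semi-definite, i.e., xᵀ AᵀC x ≥ 0 for all x ∈ ℝ^n. If z¹ and z² are both solutions of the vertical linear complementarity system, then (Az¹ − b)ᵀ(Cz² − d) = 0, (Az² − b)ᵀ(Cz¹ − d) = 0, and (z¹ − z²)ᵀ AᵀC (z¹ − z²) = 0. -/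
open scoped BigOperators
open Matrix

theorem stmt_11 {m n : ℕ}
    (A C : Matrix (Fin m) (Fin n) ℝ) (b d : Fin m → ℝ)
    (hpsd : ∀ x : Fin n → ℝ, 0 ≤ x ⬝ᵥ (Aᵀ * C).mulVec x)
    (z₁ z₂ : Fin n → ℝ)
    (hz₁ : (∀ i, 0 ≤ (A.mulVec z₁ - b) i) ∧ (∀ i, 0 ≤ (C.mulVec z₁ - d) i) ∧
      (A.mulVec z₁ - b) ⬝ᵥ (C.mulVec z₁ - d) = 0)
    (hz₂ : (∀ i, 0 ≤ (A.mulVec z₂ - b) i) ∧ (∀ i, 0 ≤ (C.mulVec z₂ - d) i) ∧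
      (A.mulVec z₂ - b) ⬝ᵥ (C.mulVec z₂ - d) = 0) :
    (A.mulVec z₁ - b) ⬝ᵥ (C.mulVec z₂ - d) = 0 ∧
    (A.mulVec z₂ - b) ⬝ᵥ (C.mulVec z₁ - d) = 0 ∧
    (z₁ - z₂) ⬝ᵥ (Aᵀ * C).mulVec (z₁ - z₂) = 0 := by
  obtain ⟨hu₁, hv₁, h₁⟩ := hz₁
  obtain ⟨hu₂, hv₂, h₂⟩ := hz₂
  set u₁ := A.mulVec z₁ - b
  set u₂ := A.mulVec z₂ - b
  set v₁ := C.mulVec z₁ - d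
  set v₂ := C.mulVec z₂ - d
  have key : ∀ x : Fin n → ℝ,
      x ⬝ᵥ (Aᵀ * C).mulVec x = (A.mulVec x) ⬝ᵥ (C.mulVec x) := by
    intro x
    rw [← Matrix.mulVec_mulVec, Matrix.dotProduct_mulVec, Matrix.vecMul_transpose]
  have hA : A.mulVec (z₁ - z₂) = u₁ - u₂ := by
    simp [u₁, u₂, Matrix.mulVec_sub]
  have hC : C.mulVec (z₁ - z₂) = v₁ - v₂ := by
    simp [v₁, v₂, Matrix.mulVec_sub]
  have hq : (z₁ - z₂) ⬝ᵥ (Aᵀ * C).mulVec (z₁ - z₂) = -(u₁ ⬝ᵥ v₂ + u₂ ⬝ᵥ v₁) := by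
    have expand : (u₁ - u₂) ⬝ᵥ (v₁ - v₂) =
        u₁ ⬝ᵥ v₁ - u₁ ⬝ᵥ v₂ - u₂ ⬝ᵥ v₁ + u₂ ⬝ᵥ v₂ := by
      simp only [sub_dotProduct, dotProduct_sub]
      ring
    rw [key, hA, hC, expand, h₁, h₂]
    ring
  have h12 : 0 ≤ u₁ ⬝ᵥ v₂ := Finset.sum_nonneg fun i _ =>
    mul_nonneg (hu₁ i) (hv₂ i)
  have h21 : 0 ≤ u₂ ⬝ᵥ v₁ := Finset.sum_nonneg fun i _ =>
    mul_nonneg (hu₂ i) (hv₁ i)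
  have hle : u₁ ⬝ᵥ v₂ + u₂ ⬝ᵥ v₁ ≤ 0 := by
    have := hpsd (z₁ - z₂)
    rw [hq] at this
    linarith
  have h12' : u₁ ⬝ᵥ v₂ = 0 := by linarith
  have h21' : u₂ ⬝ᵥ v₁ = 0 := by linarith
  refine ⟨h12', h21', ?_⟩
  rw [hq, h12', h21']
  ring
end

section
/- Let A, C ∈ ℝ^{m×n} and b, d ∈ ℝ^m. If AᵀC is positive definite, i.e., xᵀ AᵀC x > 0 for all nonzero x ∈ ℝ^n, then the vertical linear complementarity system has at most one solution: if z¹ and z² both satisfy Az − b ≥ 0, Cz − d ≥ 0, (Az − b)ᵀ(Cz − d) = 0, then z¹ = z². -/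
open scoped BigOperators
open Matrix

theorem stmt_12 {m n : ℕ}
    (A C : Matrix (Fin m) (Fin n) ℝ) (b d : Fin m → ℝ)
    (hpd : ∀ x : Fin n → ℝ, x ≠ 0 → 0 < x ⬝ᵥ (Aᵀ * C).mulVec x)
    (z₁ z₂ : Fin n → ℝ)
    (hz₁ : (∀ i, 0 ≤ (A.mulVec z₁ - b) i) ∧ (∀ i, 0 ≤ (C.mulVec z₁ - d) i) ∧
      (A.mulVec z₁ - b) ⬝ᵥ (C.mulVec z₁ - d) = 0)
    (hz₂ : (∀ i, 0 ≤ (A.mulVec z₂ - b) i) ∧ (∀ i, 0 ≤ (C.mulVec z₂ - d) i) ∧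
      (A.mulVec z₂ - b) ⬝ᵥ (C.mulVec z₂ - d) = 0) :
    z₁ = z₂ := by
  obtain ⟨hp₁, hq₁, h₁⟩ := hz₁
  obtain ⟨hp₂, hq₂, h₂⟩ := hz₂
  by_contra hne
  have hu : z₁ - z₂ ≠ 0 := sub_ne_zero.mpr hne
  have hpos := hpd (z₁ - z₂) hu
  have hquad : (z₁ - z₂) ⬝ᵥ (Aᵀ * C).mulVec (z₁ - z₂)
      = (A.mulVec (z₁ - z₂)) ⬝ᵥ (C.mulVec (z₁ - z₂)) := by
    rw [← Matrix.mulVec_mulVec, Matrix.dotProduct_mulVec, Matrix.vecMul_transpose]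
  have hA : A.mulVec (z₁ - z₂) = (A.mulVec z₁ - b) - (A.mulVec z₂ - b) := by
    rw [Matrix.mulVec_sub]; abel
  have hC : C.mulVec (z₁ - z₂) = (C.mulVec z₁ - d) - (C.mulVec z₂ - d) := by
    rw [Matrix.mulVec_sub]; abel
  have h12 : 0 ≤ (A.mulVec z₁ - b) ⬝ᵥ (C.mulVec z₂ - d) :=
    Finset.sum_nonneg fun i _ => mul_nonneg (hp₁ i) (hq₂ i)
  have h21 : 0 ≤ (A.mulVec z₂ - b) ⬝ᵥ (C.mulVec z₁ - d) :=
    Finset.sum_nonneg fun i _ => mul_nonneg (hp₂ i) (hq₁ i)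
  have key : (A.mulVec z₁ - b - (A.mulVec z₂ - b)) ⬝ᵥ (C.mulVec z₁ - d - (C.mulVec z₂ - d))
      = (A.mulVec z₁ - b) ⬝ᵥ (C.mulVec z₁ - d) - (A.mulVec z₁ - b) ⬝ᵥ (C.mulVec z₂ - d)
        - (A.mulVec z₂ - b) ⬝ᵥ (C.mulVec z₁ - d) + (A.mulVec z₂ - b) ⬝ᵥ (C.mulVec z₂ - d) := by
    simp only [sub_dotProduct, dotProduct_sub]; ring
  rw [hquad, hA, hC, key, h₁, h₂] at hpos
  linarith
end

section
/- Let x ∈ ℝ^n with ‖x‖₀ = k ≥ 1, i.e., x has exactly k nonzero components. Then the Euclidean distance from x to the set Q_{k−1} = {y ∈ ℝ^n : ‖y‖₀ ≤ k − 1} equals the smallest absolute value of a nonzero component of x: dist(x, Q_{k−1}) = min{|x_j| : x_j ≠ 0}. -/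
open scoped BigOperators

/-! Deleting the smallest nonzero coordinate of `x` gives a point with one fewer nonzero
coordinate at distance exactly `min |x j|`. Conversely, a vector with fewer nonzero coordinates
than `x` must vanish at some coordinate `i` where `x i ≠ 0`, and the Euclidean distance
dominates every coordinate difference, so its distance to `x` is at least `|x i|`. -/

open Metric

namespace EuclideanSpace

variable {ι : Type*}

lemma abs_apply_le_dist_of_apply_eq_zero [Fintype ι] {x y : EuclideanSpace ℝ ι} {i : ι}
    (hy : y i = 0) : |x i| ≤ dist x y := by
  simpa [hy, Real.dist_eq] using PiLp.dist_apply_le x y i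

variable [DecidableEq ι]

lemma dist_sub_single_apply_self [Fintype ι] (x : EuclideanSpace ℝ ι) (j : ι) :
    dist x (x - single j (x j)) = |x j| := by
  simp

lemma setOf_sub_single_apply_self_ne_zero (x : EuclideanSpace ℝ ι) (j : ι) :
    {i | (x - single j (x j)) i ≠ 0} = {i | x i ≠ 0} \ {j} := by
  ext i
  by_cases h : i = j <;> simp [h]

theorem infDist_setOf_ncard_lt_eq_abs [Fintype ι] {x : EuclideanSpace ℝ ι} {j₀ : ι}
    (hj₀ : x j₀ ≠ 0) (hmin : ∀ j, x j ≠ 0 → |x j₀| ≤ |x j|) :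
    infDist x {y : EuclideanSpace ℝ ι | {i | y i ≠ 0}.ncard < {i | x i ≠ 0}.ncard} = |x j₀| := by
  have hdrop : x - single j₀ (x j₀) ∈
      {y : EuclideanSpace ℝ ι | {i | y i ≠ 0}.ncard < {i | x i ≠ 0}.ncard} := by
    rw [Set.mem_ofPred_eq, setOf_sub_single_apply_self_ne_zero]
    exact Set.ncard_sdiff_singleton_lt_of_mem hj₀
  refine le_antisymm ?_ ((le_infDist ⟨_, hdrop⟩).2 fun y hy => ?_)
  · exact (infDist_le_dist_of_mem hdrop).trans_eq (dist_sub_single_apply_self x j₀)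
  · obtain ⟨i, hxi, hyi⟩ := Set.exists_mem_notMem_of_ncard_lt_ncard hy
    exact (hmin i hxi).trans (abs_apply_le_dist_of_apply_eq_zero (not_not.1 hyi))

end EuclideanSpace

theorem stmt_13 {n : ℕ} (x : EuclideanSpace ℝ (Fin n)) (k : ℕ)
    (hk : nnz x = k) (hk1 : 1 ≤ k) :
    Metric.infDist x {y : EuclideanSpace ℝ (Fin n) | nnz y ≤ k - 1}
      = sInf ((fun j => |x j|) '' {j | x j ≠ 0}) := by
  have hsupp : {j | x j ≠ 0}.Nonempty :=
    Set.nonempty_of_ncard_ne_zero (by unfold nnz at hk; omega)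
  obtain ⟨j₀, hj₀, hmin⟩ := Set.exists_min_image _ (fun j => |x j|) (Set.toFinite _) hsupp
  have hQ : {y : EuclideanSpace ℝ (Fin n) | nnz y ≤ k - 1} =
      {y | {i | y i ≠ 0}.ncard < {i | x i ≠ 0}.ncard} := by
    ext y
    simp only [Set.mem_ofPred_eq, nnz] at hk ⊢
    omega
  rw [hQ, EuclideanSpace.infDist_setOf_ncard_lt_eq_abs hj₀ hmin,
    IsLeast.csInf_eq ⟨Set.mem_image_of_mem _ hj₀, Set.forall_mem_image.2 hmin⟩]
end

section
/- Let ν > 0, let F ⊆ ℝ^n be a nonempty convex set, let f₁ : ℝ^n → ℝ be convex, and define Ψ(z) = f₁(z) − Σ_{i=1}^n max{0, z_i/ν − 1, −z_i/ν − 1} for z ∈ ℝ^n. Fix x ∈ F and define g ∈ ℝ^n by g_i = 0 if |x_i| < ν, g_i = 1/ν if x_i ≥ ν, and g_i = −1/ν if x_i ≤ −ν. Suppose y ∈ F minimizes z ↦ f₁(z) − gᵀz + (1/2)‖z − x‖² over F, i.e., f₁(y) − gᵀy + (1/2)‖y − x‖² ≤ f₁(z) − gᵀz + (1/2)‖z −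 x‖² for all z ∈ F. Then Ψ(x) ≥ Ψ(y) + (1/2)‖y − x‖². -/
/-!
The capped-ℓ₁ penalty `∑ i, max 0 (max (zᵢ/ν - 1) (-zᵢ/ν - 1))` is a sum of maxima of affine
functions, and `g` picks the slope of an active piece at `x`, so `g` is a subgradient of the penalty
at `x`. Comparing the minimality of `y` with the competitor `z = x` and adding the subgradient
inequality gives the descent estimate for `Ψ = f₁ - penalty`.
-/

open scoped BigOperators

noncomputable def cappedPenalty (ν t : ℝ) : ℝ := max 0 (max (t / ν - 1) (-t / ν - 1))

lemma cappedPenalty_add_mul_sub_le {ν : ℝ} (hν : 0 < ν) {s t : ℝ}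
    (hs₁ : |t| < ν → s = 0) (hs₂ : ν ≤ t → s = 1 / ν) (hs₃ : t ≤ -ν → s = -(1 / ν))
    (u : ℝ) : cappedPenalty ν t + s * (u - t) ≤ cappedPenalty ν u := by
  unfold cappedPenalty
  rcases lt_or_ge |t| ν with ht | ht
  · obtain ⟨ht₁, ht₂⟩ := abs_lt.mp ht
    have hpos : t / ν - 1 ≤ 0 := by rw [sub_nonpos, div_le_one hν]; exact ht₂.le
    have hneg : -t / ν - 1 ≤ 0 := by rw [sub_nonpos, div_le_one hν]; linarith
    rw [hs₁ ht, max_eq_left (max_le hpos hneg), zero_mul, add_zero]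
    exact le_max_left _ _
  rcases le_abs'.mp ht with ht | ht
  · have hactive : max 0 (max (t / ν - 1) (-t / ν - 1)) ≤ -t / ν - 1 := by
      have h0 : 0 ≤ -t / ν - 1 := by rw [sub_nonneg, le_div_iff₀ hν]; linarith
      have h1 : t / ν - 1 ≤ -t / ν - 1 := by gcongr; linarith
      exact max_le h0 (max_le h1 le_rfl)
    have hpiece : -u / ν - 1 ≤ max 0 (max (u / ν - 1) (-u / ν - 1)) :=
      (le_max_right _ _).trans (le_max_right _ _)
    have hline : -t / ν - 1 + -(1 / ν) * (u - t) = -u / ν - 1 := by field_simp; ring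
    rw [hs₃ ht]
    linarith
  · have hactive : max 0 (max (t / ν - 1) (-t / ν - 1)) ≤ t / ν - 1 := by
      have h0 : 0 ≤ t / ν - 1 := by rw [sub_nonneg, le_div_iff₀ hν]; linarith
      have h1 : -t / ν - 1 ≤ t / ν - 1 := by gcongr; linarith
      exact max_le h0 (max_le le_rfl h1)
    have hpiece : u / ν - 1 ≤ max 0 (max (u / ν - 1) (-u / ν - 1)) :=
      (le_max_left _ _).trans (le_max_right _ _)
    have hline : t / ν - 1 + 1 / ν * (u - t) = u / ν - 1 := by field_simp; ring
    rw [hs₂ ht]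
    linarith

lemma sum_cappedPenalty_add_sum_mul_sub_le {ι : Type*} [Fintype ι] {ν : ℝ} (hν : 0 < ν)
    {x g : ι → ℝ} (hg₁ : ∀ i, |x i| < ν → g i = 0) (hg₂ : ∀ i, ν ≤ x i → g i = 1 / ν)
    (hg₃ : ∀ i, x i ≤ -ν → g i = -(1 / ν)) (y : ι → ℝ) :
    ∑ i, cappedPenalty ν (x i) + (∑ i, g i * y i - ∑ i, g i * x i)
      ≤ ∑ i, cappedPenalty ν (y i) := by
  simp_rw [← Finset.sum_sub_distrib, ← mul_sub, ← Finset.sum_add_distrib]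
  exact Finset.sum_le_sum fun i _ =>
    cappedPenalty_add_mul_sub_le hν (hg₁ i) (hg₂ i) (hg₃ i) (y i)

theorem stmt_14_general {n : ℕ} (ν : ℝ) (hν : 0 < ν)
    (F : Set (EuclideanSpace ℝ (Fin n)))
    (f₁ : EuclideanSpace ℝ (Fin n) → ℝ)
    (Ψ : EuclideanSpace ℝ (Fin n) → ℝ)
    (hΨ : ∀ z, Ψ z = f₁ z - ∑ i, max 0 (max (z i / ν - 1) (-(z i) / ν - 1)))
    (x : EuclideanSpace ℝ (Fin n)) (hxF : x ∈ F)
    (g : Fin n → ℝ)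
    (hg1 : ∀ i, |x i| < ν → g i = 0)
    (hg2 : ∀ i, ν ≤ x i → g i = 1 / ν)
    (hg3 : ∀ i, x i ≤ -ν → g i = -(1 / ν))
    (y : EuclideanSpace ℝ (Fin n))
    (hymin : ∀ z ∈ F, f₁ y - ∑ i, g i * y i + (1 / 2) * ‖y - x‖ ^ 2
      ≤ f₁ z - ∑ i, g i * z i + (1 / 2) * ‖z - x‖ ^ 2) :
    Ψ y + (1 / 2) * ‖y - x‖ ^ 2 ≤ Ψ x := by
  have hsubgrad := sum_cappedPenalty_add_sum_mul_sub_le hν hg1 hg2 hg3 y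
  have hmin := hymin x hxF
  rw [sub_self, norm_zero] at hmin
  unfold cappedPenalty at hsubgrad
  rw [hΨ x, hΨ y]
  linarith

theorem stmt_14 {n : ℕ} (ν : ℝ) (hν : 0 < ν)
    (F : Set (EuclideanSpace ℝ (Fin n))) (hFne : F.Nonempty) (hFconv : Convex ℝ F)
    (f₁ : EuclideanSpace ℝ (Fin n) → ℝ) (hf₁ : ConvexOn ℝ Set.univ f₁)
    (Ψ : EuclideanSpace ℝ (Fin n) → ℝ)
    (hΨ : ∀ z, Ψ z = f₁ z - ∑ i, max 0 (max (z i / ν - 1) (-(z i) / ν - 1)))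
    (x : EuclideanSpace ℝ (Fin n)) (hxF : x ∈ F)
    (g : Fin n → ℝ)
    (hg1 : ∀ i, |x i| < ν → g i = 0)
    (hg2 : ∀ i, ν ≤ x i → g i = 1 / ν)
    (hg3 : ∀ i, x i ≤ -ν → g i = -(1 / ν))
    (y : EuclideanSpace ℝ (Fin n)) (hyF : y ∈ F)
    (hymin : ∀ z ∈ F, f₁ y - ∑ i, g i * y i + (1 / 2) * ‖y - x‖ ^ 2
      ≤ f₁ z - ∑ i, g i * z i + (1 / 2) * ‖z - x‖ ^ 2) :
    Ψ y + (1 / 2) * ‖y - x‖ ^ 2 ≤ Ψ x :=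
  stmt_14_general ν hν F f₁ Ψ hΨ x hxF g hg1 hg2 hg3 y hymin
end

section
/- Let {h_l}, {μ_l}, {ρ_l}, {Φ_l} be real sequences and m, Υ ∈ ℝ such that for every l: μ_l ≥ 0, ρ_l > 0, Φ_l ≥ m, and Φ_l + (1/(2ρ_l)) ( (max{μ_l + ρ_l h_l, 0})² − μ_l² ) ≤ Υ. If μ_l/ρ_l → 0 and ρ_l → ∞ as l → ∞, then max{h_l, 0} → 0 as l → ∞. -/
open Filter Topology

/-- For `t > 0` and `μ ≥ 0` one has `(μ + ρ t)² - μ² ≥ ρ² t²`, so the penalty term bounds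
`ρ t² / 2`. -/
lemma max_zero_sq_le_of_penalty_le {μ ρ t c : ℝ} (hμ : 0 ≤ μ) (hρ : 0 < ρ)
    (hpen : 1 / (2 * ρ) * ((max (μ + ρ * t) 0) ^ 2 - μ ^ 2) ≤ c) :
    (max t 0) ^ 2 ≤ 2 * max c 0 / ρ := by
  rw [le_div_iff₀ hρ]
  rcases le_or_gt t 0 with ht | ht
  · rw [max_eq_right ht]
    simp only [ne_eq, OfNat.ofNat_ne_zero, not_false_eq_true, zero_pow, zero_mul]
    positivity
  · have hpos : 0 < μ + ρ * t := by positivity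
    rw [max_eq_left ht.le]
    rw [max_eq_left hpos.le, div_mul_eq_mul_div, one_mul, div_le_iff₀ (by positivity)] at hpen
    nlinarith [le_max_left c 0, mul_nonneg hμ (mul_nonneg hρ.le ht.le)]

lemma tendsto_zero_of_sq_le_div {u ρ : ℕ → ℝ} {K : ℝ} (hu : ∀ l, 0 ≤ u l)
    (hsq : ∀ l, u l ^ 2 ≤ K / ρ l) (hρ : Tendsto ρ atTop atTop) :
    Tendsto u atTop (𝓝 0) := by
  have hsq_lim : Tendsto (fun l => u l ^ 2) atTop (𝓝 0) :=
    squeeze_zero (fun l => sq_nonneg (u l)) hsq (tendsto_const_nhds.div_atTop hρ)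
  simpa [Real.sqrt_sq (hu _)] using hsq_lim.sqrt

theorem stmt_15_general
    (h μ ρ Φ : ℕ → ℝ) (m Υ : ℝ)
    (hμ : ∀ l, 0 ≤ μ l) (hρ : ∀ l, 0 < ρ l) (hΦ : ∀ l, m ≤ Φ l)
    (hbound : ∀ l, Φ l + (1 / (2 * ρ l)) * ((max (μ l + ρ l * h l) 0) ^ 2 - (μ l) ^ 2) ≤ Υ)
    (hρtop : Filter.Tendsto ρ Filter.atTop Filter.atTop) :
    Filter.Tendsto (fun l => max (h l) 0) Filter.atTop (nhds 0) := by
  refine tendsto_zero_of_sq_le_div (K := 2 * max (Υ - m) 0) (fun l => le_max_right _ _)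
    (fun l => ?_) hρtop
  exact max_zero_sq_le_of_penalty_le (hμ l) (hρ l) (by linarith [hbound l, hΦ l])

theorem stmt_15
    (h μ ρ Φ : ℕ → ℝ) (m Υ : ℝ)
    (hμ : ∀ l, 0 ≤ μ l) (hρ : ∀ l, 0 < ρ l) (hΦ : ∀ l, m ≤ Φ l)
    (hbound : ∀ l, Φ l + (1 / (2 * ρ l)) * ((max (μ l + ρ l * h l) 0) ^ 2 - (μ l) ^ 2) ≤ Υ)
    (hμρ : Filter.Tendsto (fun l => μ l / ρ l) Filter.atTop (nhds 0))
    (hρtop : Filter.Tendsto ρ Filter.atTop Filter.atTop) :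
    Filter.Tendsto (fun l => max (h l) 0) Filter.atTop (nhds 0) :=
  stmt_15_general h μ ρ Φ m Υ hμ hρ hΦ hbound hρtop
end

section
/- Let ν > 0 and let x̄ ∈ ℝ^n be such that for every i either x̄_i = 0 or |x̄_i| > ν. Then there exists δ > 0 such that for every x with ‖x − x̄‖ ≤ δ one has Φ_ν(x) ≥ Φ_ν(x̄) = ‖x̄‖₀ and ‖x‖₀ ≥ ‖x̄‖₀. Consequently, if S ⊆ ℝ^n is any set containing x̄ (in particular the solution set S = {x : G(x) ≥ 0, H(x) ≥ 0, G(x)ᵀH(x) = 0} of a complementarity system), then x̄ is a local minimizer both of Φ_ν over S and of ‖·‖₀ over S. -/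
open scoped BigOperators

lemma coord_abs_le_norm {n : ℕ} (y : EuclideanSpace ℝ (Fin n)) (i : Fin n) :
    |y i| ≤ ‖y‖ := by
  rw [EuclideanSpace.norm_eq]
  have h1 : |y i| = Real.sqrt (|y i| ^ 2) := by
    rw [Real.sqrt_sq_eq_abs, abs_abs]
  rw [h1]
  apply Real.sqrt_le_sqrt
  exact Finset.single_le_sum (f := fun j => |y j| ^ 2) (fun j _ => sq_nonneg _) (Finset.mem_univ i)

lemma nnz_eq_card {n : ℕ} (x : EuclideanSpace ℝ (Fin n)) :
    nnz x = (Finset.univ.filter (fun i => x i ≠ 0)).card := by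
  rw [nnz, ← Set.ncard_coe_finset]
  congr 1
  ext i
  simp

theorem stmt_16 {n : ℕ} (ν : ℝ) (hν : 0 < ν)
    (xbar : EuclideanSpace ℝ (Fin n))
    (hxbar : ∀ i, xbar i = 0 ∨ ν < |xbar i|) :
    Phi ν xbar = (nnz xbar : ℝ) ∧
    ∃ δ > (0 : ℝ),
      (∀ x : EuclideanSpace ℝ (Fin n), ‖x - xbar‖ ≤ δ →
        Phi ν xbar ≤ Phi ν x ∧ nnz xbar ≤ nnz x) ∧
      (∀ S : Set (EuclideanSpace ℝ (Fin n)), xbar ∈ S →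
        ∀ x ∈ S, ‖x - xbar‖ ≤ δ → Phi ν xbar ≤ Phi ν x ∧ nnz xbar ≤ nnz x) := by
  classical
  set F : Finset (Fin n) := Finset.univ.filter (fun i => xbar i ≠ 0) with hF
  have hterm : ∀ i, min 1 (|xbar i| / ν) = if xbar i ≠ 0 then (1 : ℝ) else 0 := by
    intro i
    rcases hxbar i with h | h
    · simp [h]
    · have hne : xbar i ≠ 0 := by
        intro h0; rw [h0] at h; simp at h; linarith
      have : (1 : ℝ) ≤ |xbar i| / ν := (one_le_div hν).mpr h.le
      simp [hne, min_eq_left this]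
  have hPhi : Phi ν xbar = (nnz xbar : ℝ) := by
    rw [Phi, nnz_eq_card]
    rw [Finset.sum_congr rfl (fun i _ => hterm i)]
    rw [Finset.sum_ite, Finset.sum_const, Finset.sum_const]
    simp [hF]
  refine ⟨hPhi, ?_⟩
  -- choose δ
  by_cases hFe : F.Nonempty
  case neg =>
    -- xbar = 0 everywhere
    have hz : ∀ i, xbar i = 0 := by
      intro i
      by_contra h
      exact hFe ⟨i, by simp [hF, h]⟩
    have hnnz0 : nnz xbar = 0 := by
      rw [nnz_eq_card]
      rw [Finset.not_nonempty_iff_eq_empty] at hFe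
      simp only [hF] at hFe
      rw [hFe, Finset.card_empty]
    have key : ∀ x : EuclideanSpace ℝ (Fin n),
        Phi ν xbar ≤ Phi ν x ∧ nnz xbar ≤ nnz x := by
      intro x
      constructor
      · rw [hPhi, hnnz0]
        simp only [Nat.cast_zero]
        apply Finset.sum_nonneg
        intro i _
        exact le_min zero_le_one (by positivity)
      · rw [hnnz0]; exact Nat.zero_le _
    exact ⟨1, one_pos, fun x _ => key x, fun S _ x _ _ => key x⟩
  case pos =>
    set δ : ℝ := F.inf' hFe (fun i => |xbar i| - ν) with hδ
    have hδpos : 0 < δ := by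
      rw [hδ, Finset.lt_inf'_iff]
      intro i hi
      have hne : xbar i ≠ 0 := by simpa [hF] using hi
      rcases hxbar i with h | h
      · exact absurd h hne
      · linarith
    have key : ∀ x : EuclideanSpace ℝ (Fin n), ‖x - xbar‖ ≤ δ →
        Phi ν xbar ≤ Phi ν x ∧ nnz xbar ≤ nnz x := by
      intro x hx
      have hbig : ∀ i ∈ F, ν ≤ |x i| := by
        intro i hi
        have h1 : |x i - xbar i| ≤ δ := by
          have := coord_abs_le_norm (x - xbar) i
          simp only [PiLp.sub_apply] at this
          linarith
        have h2 : δ ≤ |xbar i| - ν := Finset.inf'_le _ hi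
        have := abs_sub_abs_le_abs_sub (xbar i) (x i)
        rw [abs_sub_comm] at h1
        linarith
      constructor
      · rw [hPhi, nnz_eq_card, ← hF]
        have : (F.card : ℝ) = ∑ i ∈ F, (1 : ℝ) := by simp
        rw [this]
        calc ∑ i ∈ F, (1 : ℝ) ≤ ∑ i ∈ F, min 1 (|x i| / ν) := by
              apply Finset.sum_le_sum
              intro i hi
              exact le_min le_rfl ((one_le_div hν).mpr (hbig i hi))
          _ ≤ ∑ i, min 1 (|x i| / ν) := by
              apply Finset.sum_le_sum_of_subset_of_nonneg (Finset.subset_univ _)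
              intro i _ _
              exact le_min zero_le_one (by positivity)
      · rw [nnz_eq_card, nnz_eq_card, ← hF]
        apply Finset.card_le_card
        intro i hi
        have : ν ≤ |x i| := hbig i hi
        have hne : x i ≠ 0 := by
          intro h0; rw [h0] at this; simp at this; linarith
        simp [hne]
    exact ⟨δ, hδpos, fun x hx => key x hx, fun S _ x _ hx => key x hx⟩
end
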